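/- arXiv:0709.2217 — 5 statements merged into one kernel-verified Lean document; each statement's English description precedes it below -/
import Mathlib

section
/- Let p be a prime and let CM(G, X, q) be a p-valent regular Cayley map on a finite abelian group G. Then CM(G, X, q) is either balanced or anti-balanced. -/
/-- A Cayley map `CM(G, X, q)`: a finite subset `X` of `G` with `1 ∉ X`,
closed under inverses, generating `G`, together with a permutation `q` of `X`
acting on `X` as a single cycle of length `|X|`. -/
structure CayleyMapData (G : Type*) [Group G] where
  X : Finset G
  one_not_mem : (1 : G) ∉ X
  inv_mem : ∀ x ∈ X, x⁻¹ ∈ X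
  gen : Subgroup.closure (X : Set G) = ⊤
  q : Equiv.Perm {x : G // x ∈ X}
  single_cycle : ∀ x y : {x : G // x ∈ X}, ∃ k : ℕ, (q ^ k) x = y

namespace CayleyMapData

variable {G : Type*} [Group G] (M : CayleyMapData G)

/-- The rotation `R(g, x) = (g, q(x))` on the arc set `G × X`. -/
def rotation : Equiv.Perm (G × {x : G // x ∈ M.X}) :=
  (Equiv.refl G).prodCongr M.q

/-- The arc-reversing involution `L(g, x) = (g·x, x⁻¹)` on the arc set `G × X`. -/
def invol : Equiv.Perm (G × {x : G // x ∈ M.X}) where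
  toFun d := (d.1 * d.2.1, ⟨(d.2.1 : G)⁻¹, M.inv_mem _ d.2.2⟩)
  invFun d := (d.1 * d.2.1, ⟨(d.2.1 : G)⁻¹, M.inv_mem _ d.2.2⟩)
  left_inv := by rintro ⟨g, x, hx⟩; simp
  right_inv := by rintro ⟨g, x, hx⟩; simp

/-- The Cayley map is regular: the monodromy group `⟨R, L⟩` acts sharply
transitively on the arc set. -/
def IsRegular : Prop :=
  ∀ d d' : G × {x : G // x ∈ M.X},
    ∃! m : Subgroup.closure ({M.rotation, M.invol} :
        Set (Equiv.Perm (G × {x : G // x ∈ M.X}))),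
      (m : Equiv.Perm (G × {x : G // x ∈ M.X})) d = d'

/-- Balanced: `(q x)⁻¹ = q (x⁻¹)` for all `x ∈ X`. -/
def IsBalanced : Prop :=
  ∀ x : {x : G // x ∈ M.X},
    ((M.q x : G))⁻¹ = (M.q ⟨(x : G)⁻¹, M.inv_mem _ x.2⟩ : G)

/-- Anti-balanced: `(q x)⁻¹ = q⁻¹ (x⁻¹)` for all `x ∈ X`. -/
def IsAntiBalanced : Prop :=
  ∀ x : {x : G // x ∈ M.X},
    ((M.q x : G))⁻¹ = (M.q⁻¹ ⟨(x : G)⁻¹, M.inv_mem _ x.2⟩ : G)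

end CayleyMapData

/-!
Number the generators `E k = q^k x₀`, `k : ZMod p`, so that `q` becomes `k ↦ k + 1` and inversion
becomes an involution `σ = invIndex E` of `ZMod p`. By regularity some map automorphism sends the
arc `(1, x₀)` to `(1, q x₀)`; it turns the arcs at each vertex `g` by `J g` steps, and commuting
with the arc reversal gives `J 1 = 1` and `J (g · E k) = σ (k + J g) - σ k`. Hence every
`T_k c = σ (k + c) - σ k` permutes `Ω = range J`, a set avoiding `0`, and as `G` is abelian the
`T_k` commute on `Ω`.

Summing `T_{k+1} - T_k` over `Ω` gives `∑_{c ∈ Ω} δ (k + c) = |Ω| δ k` for `δ = Δσ`, and Newton's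
forward-difference expansion turns this into `Δ^|Ω| δ = 0`. Since `δ` takes values in `Ω` and
`|Ω| < p`, some `δ a = δ b` with `a ≠ b`; then `T_a - T_b` vanishes on `Ω ∪ {0}` and is a
polynomial of degree at most `|Ω|`, so it vanishes, `δ` is `(b - a)`-periodic, hence constant. An
involution of `ZMod p` with constant difference has slope `±1`: slope `1` means balanced, slope
`-1` anti-balanced.
-/

open Finset Polynomial fwdDiff

theorem fwdDiff_iter_zero {M G : Type*} [AddCommMonoid M] [AddCommGroup G] (h : M) (n : ℕ) :
    Δ_[h] ^[n] (0 : M → G) = 0 :=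
  Function.iterate_fixed (fwdDiff_const h 0) n

open fwdDiff_aux in
theorem fwdDiff_iter_sub {M G : Type*} [AddCommMonoid M] [AddCommGroup G] (h : M)
    (f g : M → G) (n : ℕ) : Δ_[h] ^[n] (f - g) = Δ_[h] ^[n] f - Δ_[h] ^[n] g := by
  simpa only [coe_fwdDiffₗ_pow] using map_sub (fwdDiffₗ M G h ^ n) f g

theorem fwdDiff_iter_eq_zero_of_le {M G : Type*} [AddCommMonoid M] [AddCommGroup G] {h : M}
    {f : M → G} {m j : ℕ} (hf : Δ_[h] ^[m] f = 0) (hj : m ≤ j) : Δ_[h] ^[j] f = 0 := by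
  obtain ⟨t, rfl⟩ := Nat.exists_eq_add_of_le hj
  rw [add_comm, Function.iterate_add_apply, hf, fwdDiff_iter_zero]

namespace ZMod

theorem eq_sum_choose_smul_fwdDiff_iter {n : ℕ} [NeZero n] {G : Type*} [AddCommGroup G]
    {f : ZMod n → G} {m : ℕ} (hf : Δ_[1] ^[m] f = 0) (x : ZMod n) :
    f x = ∑ j ∈ range m, x.val.choose j • Δ_[1] ^[j] f 0 := by
  calc f x = f (0 + x.val • 1) := by rw [zero_add, nsmul_one, natCast_zmod_val]
    _ = ∑ j ∈ range (x.val + 1), x.val.choose j • Δ_[1] ^[j] f 0 :=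
      shift_eq_sum_fwdDiff_iter 1 f _ 0
    _ = ∑ j ∈ range (x.val + 1 + m), x.val.choose j • Δ_[1] ^[j] f 0 := by
      refine sum_subset (range_subset_range.2 (by omega)) fun j _ hj => ?_
      rw [Nat.choose_eq_zero_of_lt (by simpa using hj), zero_smul]
    _ = ∑ j ∈ range m, x.val.choose j • Δ_[1] ^[j] f 0 := by
      refine (sum_subset (range_subset_range.2 (by omega)) fun j _ hj => ?_).symm
      rw [fwdDiff_iter_eq_zero_of_le hf (by simpa using hj), Pi.zero_apply, smul_zero]

theorem apply_eq_apply_zero_of_periodic {n : ℕ} [NeZero n] {α : Type*} {f : ZMod n → α}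
    {d : ZMod n} (hf : Function.Periodic f d) (hd : IsUnit d) (x : ZMod n) : f x = f 0 := by
  obtain ⟨u, rfl⟩ := hd
  have h := hf.nsmul (x * ↑u⁻¹).val 0
  rwa [zero_add, nsmul_eq_mul, natCast_zmod_val, Units.inv_mul_cancel_right] at h

variable {p : ℕ} [Fact p.Prime]

theorem fwdDiff_iter_prime_eq_zero (f : ZMod p → ZMod p) : Δ_[1] ^[p] f = 0 := by
  funext y
  have h := shift_eq_sum_fwdDiff_iter 1 f p y
  rw [nsmul_one, natCast_self, add_zero, sum_range_succ, Nat.choose_self, one_smul,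
    sum_eq_single 0, Nat.choose_zero_right, one_smul, Function.iterate_zero_apply] at h
  · simpa using h
  · intro j hj hj0
    rw [nsmul_eq_mul, (natCast_eq_zero_iff _ _).2 ((Fact.out : p.Prime).dvd_choose_self hj0
      (mem_range.1 hj)), zero_mul]
  · simp [(Fact.out : p.Prime).pos]

theorem exists_polynomial_eval_eq_of_fwdDiff_iter_eq_zero {f : ZMod p → ZMod p} {m : ℕ}
    (hm : m < p) (hf : Δ_[1] ^[m + 1] f = 0) :
    ∃ P : (ZMod p)[X], P.natDegree ≤ m ∧ ∀ x, P.eval x = f x := by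
  refine ⟨∑ j ∈ range (m + 1),
      C ((j.factorial : ZMod p)⁻¹ * Δ_[1] ^[j] f 0) * descPochhammer (ZMod p) j,
    natDegree_sum_le_of_forall_le _ _ fun j hj => ?_, fun x => ?_⟩
  · refine (natDegree_C_mul_le _ _).trans ?_
    rw [descPochhammer_natDegree]
    exact Nat.lt_succ_iff.1 (mem_range.1 hj)
  · rw [eq_sum_choose_smul_fwdDiff_iter hf x, eval_finsetSum]
    refine sum_congr rfl fun j hj => ?_
    have hfac : (j.factorial : ZMod p) ≠ 0 := by
      rw [Ne, natCast_eq_zero_iff, (Fact.out : p.Prime).dvd_factorial]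
      have := mem_range.1 hj
      omega
    conv_lhs => rw [← natCast_zmod_val x]
    rw [eval_mul, eval_C, descPochhammer_eval_eq_descFactorial,
      Nat.descFactorial_eq_factorial_mul_choose, nsmul_eq_mul, Nat.cast_mul]
    field_simp

theorem eq_zero_of_fwdDiff_iter_eq_zero_of_lt_card {f : ZMod p → ZMod p} {m : ℕ}
    (hf : Δ_[1] ^[m + 1] f = 0) {s : Finset (ZMod p)} (hs : m < #s)
    (hzero : ∀ x ∈ s, f x = 0) : f = 0 := by
  obtain ⟨P, hdeg, hP⟩ := exists_polynomial_eval_eq_of_fwdDiff_iter_eq_zero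
    (hs.trans_le ((card_le_univ s).trans_eq (card p))) hf
  have hP0 : P = 0 :=
    eq_zero_of_natDegree_lt_card_of_eval_eq_zero' P s (fun x hx => (hP x).trans (hzero x hx))
      (hdeg.trans_lt hs)
  funext x
  rw [← hP x, hP0, eval_zero, Pi.zero_apply]

theorem exists_sum_choose_val_ne_zero {Ω : Finset (ZMod p)} (h0 : 0 ∉ Ω) (hne : Ω.Nonempty) :
    ∃ j, 1 ≤ j ∧ j ≤ #Ω ∧ ∑ c ∈ Ω, (c.val.choose j : ZMod p) ≠ 0 := by
  by_contra! H
  set P : (ZMod p)[X] := ∏ c ∈ Ω, (X - C c)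
  have hP : Δ_[1] ^[#Ω + 1] P.eval = 0 :=
    fwdDiff_iter_eq_zero_of_degree_lt (by rw [natDegree_finsetProd_X_sub_C_eq_card]; omega)
  have hroots : ∑ c ∈ Ω, P.eval c = 0 := sum_eq_zero fun c hc => by
    rw [eval_prod]
    exact prod_eq_zero hc (by rw [eval_sub, eval_X, eval_C, sub_self])
  have hsum : ∑ c ∈ Ω, P.eval c = #Ω * P.eval 0 := by
    rw [sum_congr rfl fun c _ => eq_sum_choose_smul_fwdDiff_iter hP c, sum_comm, sum_eq_single 0]
    · simp
    · intro j hj hj0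
      simp_rw [nsmul_eq_mul]
      rw [← sum_mul, H j (Nat.one_le_iff_ne_zero.2 hj0) (Nat.lt_succ_iff.1 (mem_range.1 hj)),
        zero_mul]
    · simp
  have hcard : (#Ω : ZMod p) ≠ 0 := by
    rw [Ne, natCast_eq_zero_iff]
    exact Nat.not_dvd_of_pos_of_lt hne.card_pos ((card_lt_univ_of_notMem h0).trans_eq (card p))
  have hP0 : P.eval 0 ≠ 0 := by
    rw [eval_prod, prod_ne_zero_iff]
    intro c hc
    rw [eval_sub, eval_X, eval_C, zero_sub, neg_ne_zero]
    rintro rfl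
    exact h0 hc
  exact mul_ne_zero hcard hP0 (hsum ▸ hroots)

theorem fwdDiff_iter_eq_zero_of_sum_smul_eq_zero {f : ZMod p → ZMod p} {w : ℕ → ZMod p}
    {r : ℕ} (hrel : ∑ j ∈ Ico r p, w j • Δ_[1] ^[j] f = 0) (hr : w r ≠ 0) :
    Δ_[1] ^[r] f = 0 := by
  suffices H : ∀ t i, p ≤ r + i + t → Δ_[1] ^[r + i] f = 0 from H p 0 (by omega)
  intro t
  induction t with
  | zero => exact fun i hi => fwdDiff_iter_eq_zero_of_le (fwdDiff_iter_prime_eq_zero f) (by omega)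
  | succ t ih =>
    intro i hi
    have h := congrArg (Δ_[1] ^[i]) hrel
    rw [fwdDiff_iter_finsetSum, fwdDiff_iter_zero, sum_eq_single r] at h
    · rw [fwdDiff_iter_const_smul, ← Function.iterate_add_apply, add_comm] at h
      exact (smul_eq_zero.1 h).resolve_left hr
    · intro j hj hjr
      have hj' := mem_Ico.1 hj
      rw [fwdDiff_iter_const_smul, ← Function.iterate_add_apply,
        show i + j = r + (i + j - r) by omega, ih _ (by omega), smul_zero]
    · intro hr'
      rw [fwdDiff_iter_const_smul, ← Function.iterate_add_apply,
        fwdDiff_iter_eq_zero_of_le (fwdDiff_iter_prime_eq_zero f) (by simp at hr'; omega),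
        smul_zero]

theorem fwdDiff_iter_card_eq_zero_of_sum_add_eq {f : ZMod p → ZMod p} {Ω : Finset (ZMod p)}
    (h0 : 0 ∉ Ω) (hne : Ω.Nonempty) (hrec : ∀ k, ∑ c ∈ Ω, f (k + c) = #Ω * f k) :
    Δ_[1] ^[#Ω] f = 0 := by
  set w : ℕ → ZMod p := fun j => ∑ c ∈ Ω, (c.val.choose j : ZMod p)
  have hshift : ∀ k c, f (k + c) = ∑ j ∈ range p, c.val.choose j • Δ_[1] ^[j] f k := by
    intro k c
    have := eq_sum_choose_smul_fwdDiff_iter (fwdDiff_iter_prime_eq_zero fun x => f (x + k)) c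
    simpa only [fwdDiff_iter_comp_add, zero_add, add_comm c] using this
  have hrel1 : ∑ j ∈ Ico 1 p, w j • Δ_[1] ^[j] f = 0 := by
    funext k
    have h := hrec k
    rw [sum_congr rfl fun c _ => hshift k c, sum_comm, range_eq_Ico,
      sum_eq_sum_Ico_succ_bot (Fact.out : p.Prime).pos] at h
    simpa [w, sum_mul, nsmul_eq_mul] using h
  have hex : ∃ j, 1 ≤ j ∧ j ≤ #Ω ∧ w j ≠ 0 := exists_sum_choose_val_ne_zero h0 hne
  obtain ⟨hr1, hrn, hr⟩ := Nat.find_spec hex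
  have hrel : ∑ j ∈ Ico (Nat.find hex) p, w j • Δ_[1] ^[j] f = 0 := by
    rw [← hrel1]
    refine sum_subset (Ico_subset_Ico_left hr1) fun j hj hjr => ?_
    rw [mem_Ico] at hj hjr
    have hjr : j < Nat.find hex := by omega
    have := Nat.find_min hex hjr
    simp only [not_and, not_not] at this
    rw [this hj.1 (by omega), zero_smul]
  exact fwdDiff_iter_eq_zero_of_le (fwdDiff_iter_eq_zero_of_sum_smul_eq_zero hrel hr) hrn

variable {σ : ZMod p → ZMod p}

theorem sum_fwdDiff_add_eq_card_mul (hσ : Function.Injective σ) {Ω : Finset (ZMod p)}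
    (hmaps : ∀ k, ∀ c ∈ Ω, σ (k + c) - σ k ∈ Ω) (k : ZMod p) :
    ∑ c ∈ Ω, Δ_[1] σ (k + c) = #Ω * Δ_[1] σ k := by
  have hperm : ∀ k, ∑ c ∈ Ω, (σ (k + c) - σ k) = ∑ c ∈ Ω, c := by
    intro k
    have hinj : Set.InjOn (fun c => σ (k + c) - σ k) Ω := fun a _ b _ h =>
      add_left_cancel (hσ (sub_left_inj.1 h))
    have himage : Ω.image (fun c => σ (k + c) - σ k) = Ω :=
      eq_of_subset_of_card_le (image_subset_iff.2 (hmaps k)) (card_image_of_injOn hinj).ge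
    calc ∑ c ∈ Ω, (σ (k + c) - σ k) = ∑ c ∈ Ω.image fun c => σ (k + c) - σ k, c :=
          (sum_image (f := id) hinj).symm
      _ = ∑ c ∈ Ω, c := by rw [himage]
  have hsplit : ∀ c, Δ_[1] σ (k + c) =
      (σ (k + 1 + c) - σ (k + 1)) - (σ (k + c) - σ k) + Δ_[1] σ k := by
    intro c
    simp only [fwdDiff, add_right_comm k 1 c]
    ring
  rw [sum_congr rfl fun c _ => hsplit c, sum_add_distrib, sum_sub_distrib, hperm, hperm, sub_self,
    zero_add, sum_const, nsmul_eq_mul]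

theorem fwdDiff_eq_fwdDiff_zero_of_forall_sub_mem (hσ : Function.Injective σ)
    {Ω : Finset (ZMod p)} (h0 : 0 ∉ Ω) (h1 : 1 ∈ Ω) (hmaps : ∀ k, ∀ c ∈ Ω, σ (k + c) - σ k ∈ Ω)
    (hpair : ∀ a b, Δ_[1] σ a = Δ_[1] σ b → ∀ c ∈ Ω, σ (a + c) - σ a = σ (b + c) - σ b)
    (k : ZMod p) : Δ_[1] σ k = Δ_[1] σ 0 := by
  have hδ : Δ_[1] ^[#Ω] (Δ_[1] σ) = 0 :=
    fwdDiff_iter_card_eq_zero_of_sum_add_eq h0 ⟨1, h1⟩ (sum_fwdDiff_add_eq_card_mul hσ hmaps)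
  obtain ⟨a, -, b, -, hab, hδab⟩ :=
    exists_ne_map_eq_of_card_lt_of_maps_to (card_lt_univ_of_notMem h0) fun k _ => hmaps k 1 h1
  set U : ZMod p → ZMod p := fun x => (σ (x + a) - σ a) - (σ (x + b) - σ b)
  have hU : Δ_[1] ^[#Ω + 1] U = 0 := by
    have hΔU : Δ_[1] U = (fun x => Δ_[1] σ (x + a)) - fun x => Δ_[1] σ (x + b) := by
      funext x
      simp only [U, fwdDiff, Pi.sub_apply, add_right_comm x 1]
      ring
    funext x
    rw [Function.iterate_succ_apply, hΔU, fwdDiff_iter_sub, Pi.sub_apply, fwdDiff_iter_comp_add,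
      fwdDiff_iter_comp_add, hδ]
    simp
  have hU0 : U = 0 := by
    refine eq_zero_of_fwdDiff_iter_eq_zero_of_lt_card hU (s := insert 0 Ω)
      (by rw [card_insert_of_notMem h0]; omega) fun x hx => ?_
    rcases mem_insert.1 hx with rfl | hx
    · simp [U]
    · simp [U, add_comm x, hpair a b hδab x hx]
  have hper : Function.Periodic (Δ_[1] σ) (b - a) := by
    intro x
    have h := congrFun hU0 (x - a + 1)
    have h' := congrFun hU0 (x - a)
    simp only [U, fwdDiff, Pi.zero_apply] at h h' ⊢
    rw [show x - a + 1 + a = x + 1 by ring, show x - a + 1 + b = x + (b - a) + 1 by ring] at h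
    rw [sub_add_cancel, show x - a + b = x + (b - a) by ring] at h'
    linear_combination h' - h
  exact apply_eq_apply_zero_of_periodic hper (sub_ne_zero.2 hab.symm).isUnit k

theorem fwdDiff_eq_one_or_neg_one_of_involutive (hσ : Function.Involutive σ)
    (hδ : ∀ k, Δ_[1] σ k = Δ_[1] σ 0) : (∀ k, Δ_[1] σ k = 1) ∨ ∀ k, Δ_[1] σ k = -1 := by
  set c := Δ_[1] σ 0
  have hper : Function.Periodic (fun x => σ x - x * c) 1 := fun x => by
    have h := hδ x
    simp only [fwdDiff] at h
    linear_combination h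
  have haff : ∀ x, σ x = σ 0 + x * c := fun x => by
    have h := apply_eq_apply_zero_of_periodic hper isUnit_one x
    simp only [zero_mul, sub_zero] at h
    linear_combination h
  have hinv : ∀ x, σ 0 + (σ 0 + x * c) * c = x := fun x => by rw [← haff, ← haff, hσ x]
  have hc : c * c = 1 := by linear_combination hinv 1 - hinv 0
  rcases mul_self_eq_one_iff.1 hc with h | h
  exacts [Or.inl fun k => (hδ k).trans h, Or.inr fun k => (hδ k).trans h]

end ZMod

theorem Equiv.Perm.exists_equiv_zmod_of_forall_exists_pow_apply_eq {α : Type*} [Fintype α]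
    (q : Perm α) (x₀ : α) (hq : ∀ y, ∃ k : ℕ, (q ^ k) x₀ = y) :
    ∃ E : ZMod (Fintype.card α) ≃ α, ∀ k, q (E k) = E (k + 1) := by
  classical
  have : Nonempty α := ⟨x₀⟩
  have horbit : ∀ y, y ∈ MulAction.orbit (Subgroup.zpowers q) x₀ := fun y => by
    obtain ⟨k, rfl⟩ := hq y
    exact ⟨⟨q ^ k, k, zpow_natCast q k⟩, rfl⟩
  have hper : Function.IsPeriodicPt q (Fintype.card α) x₀ := by
    have h := Function.isPeriodicPt_minimalPeriod (q • ·) x₀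
    rwa [MulAction.minimalPeriod_eq_card, Fintype.card_congr (Equiv.subtypeUnivEquiv horbit)] at h
  set E : ZMod (Fintype.card α) → α := fun k => q^[k.val] x₀
  have hE : ∀ k : ℕ, E k = q^[k] x₀ := fun k => by
    simp only [E, ZMod.val_natCast, hper.iterate_mod_apply]
  have hshift : ∀ k, q (E k) = E (k + 1) := fun k => by
    rw [← ZMod.natCast_zmod_val k, ← Nat.cast_succ, hE, hE, Function.iterate_succ_apply']
  have hsurj : Function.Surjective E := fun y => by
    obtain ⟨k, rfl⟩ := hq y
    exact ⟨k, by rw [hE, Equiv.Perm.coe_pow]⟩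
  exact ⟨Equiv.ofBijective E
    ((Fintype.bijective_iff_surjective_and_card E).2 ⟨hsurj, ZMod.card _⟩), hshift⟩

theorem Subgroup.exists_map_commute_of_existsUnique {D : Type*} (H : Subgroup (Equiv.Perm D))
    (hreg : ∀ d d' : D, ∃! h : H, (h : Equiv.Perm D) d = d') (d₀ d₁ : D) :
    ∃ Φ : D → D, Φ d₀ = d₁ ∧ ∀ h ∈ H, ∀ d, Φ (h d) = h (Φ d) := by
  choose u hu huniq using hreg d₀
  refine ⟨fun d => (u d : Equiv.Perm D) d₁, ?_, fun h hh d => ?_⟩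
  · simp [(huniq d₀ 1 rfl).symm]
  · have : u (h d) = ⟨h, hh⟩ * u d := (huniq _ _ (by simp [hu])).symm
    simp [this]

namespace CayleyMapData

section Coordinates

variable {G : Type*} [Group G] (M : CayleyMapData G)

@[simp]
theorem rotation_apply (g : G) (x : {x : G // x ∈ M.X}) : M.rotation (g, x) = (g, M.q x) := rfl

def invGen (x : {x : G // x ∈ M.X}) : {x : G // x ∈ M.X} := ⟨(x : G)⁻¹, M.inv_mem _ x.2⟩

@[simp]
theorem invol_apply (g : G) (x : {x : G // x ∈ M.X}) :
    M.invol (g, x) = (g * x, M.invGen x) := rfl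

variable {n : ℕ} (E : ZMod n ≃ {x : G // x ∈ M.X})

theorem induction_mul_right {P : G → Prop} (one : P 1) (mul : ∀ g k, P g → P (g * E k))
    (g : G) : P g := by
  have hmem : ∀ x ∈ M.X, ∃ k, (E k : G) = x := fun x hx => ⟨E.symm ⟨x, hx⟩, by simp⟩
  refine Subgroup.closure_induction_right (p := fun g _ => P g) one (fun g _ x hx hg => ?_)
    (fun g _ x hx hg => ?_) (M.gen ▸ Subgroup.mem_top g)
  · obtain ⟨k, rfl⟩ := hmem x hx
    exact mul g k hg
  · obtain ⟨k, hk⟩ := hmem x⁻¹ (M.inv_mem x hx)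
    exact hk ▸ mul g k hg

def invIndex (k : ZMod n) : ZMod n := E.symm (M.invGen (E k))

theorem apply_invIndex (k : ZMod n) : E (M.invIndex E k) = M.invGen (E k) :=
  E.apply_symm_apply _

theorem coe_apply_invIndex (k : ZMod n) : (E (M.invIndex E k) : G) = (E k : G)⁻¹ := by
  rw [apply_invIndex]
  rfl

theorem invIndex_involutive : Function.Involutive (M.invIndex E) := fun k =>
  E.injective (by rw [apply_invIndex, apply_invIndex]; exact Subtype.ext (inv_inv _))

/-- In skew-morphism language, `J` is the power function of the map. -/
structure IsPowerFunction (J : G → ZMod n) : Prop where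
  map_one : J 1 = 1
  map_mul : ∀ g k, J (g * E k) = M.invIndex E (k + J g) - M.invIndex E k

variable {M E}

theorem IsRegular.exists_isPowerFunction [NeZero n] (hreg : M.IsRegular)
    (hE : ∀ k, M.q (E k) = E (k + 1)) : ∃ J, M.IsPowerFunction E J := by
  obtain ⟨Φ, hΦ0, hΦ⟩ := Subgroup.exists_map_commute_of_existsUnique _ hreg (1, E 0) (1, E 1)
  have hR := hΦ M.rotation (Subgroup.subset_closure (Set.mem_insert _ _))
  have hL := hΦ M.invol (Subgroup.subset_closure (Set.mem_insert_of_mem _ rfl))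
  set J : G → ZMod n := fun g => E.symm (Φ (g, E 0)).2
  have hΦE : ∀ g k, Φ (g, E k) = ((Φ (g, E 0)).1, E (k + J g)) := by
    intro g k
    suffices ∀ m : ℕ, Φ (g, E m) = ((Φ (g, E 0)).1, E (m + J g)) by
      simpa only [ZMod.natCast_zmod_val] using this k.val
    intro m
    induction m with
    | zero => simp [J]
    | succ m ih =>
      rw [Nat.cast_succ, ← hE, ← rotation_apply, hR, ih, rotation_apply, hE, add_right_comm]
  refine ⟨J, by simp [J, hΦ0], fun g k => ?_⟩
  have h := hL (g, E k)
  rw [invol_apply, ← apply_invIndex, hΦE (g * E k), hΦE g k, invol_apply, ← apply_invIndex] at h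
  exact eq_sub_of_add_eq' (E.injective (congrArg Prod.snd h))

theorem IsPowerFunction.ne_zero [Fact (1 < n)] {J : G → ZMod n} (hJ : M.IsPowerFunction E J)
    (g : G) : J g ≠ 0 := by
  intro hg
  have h : ∀ h, J (g * h) = 0 := M.induction_mul_right E (by rwa [mul_one]) fun h k ih => by
    rw [← mul_assoc, hJ.map_mul, ih, add_zero, sub_self]
  simpa [hJ.map_one] using h g⁻¹

theorem isBalanced_of_fwdDiff_invIndex_eq_one (hE : ∀ k, M.q (E k) = E (k + 1))
    (h : ∀ k, Δ_[1] (M.invIndex E) k = 1) : M.IsBalanced := by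
  intro x
  obtain ⟨k, rfl⟩ := E.surjective x
  show ((M.q (E k) : G))⁻¹ = M.q (M.invGen (E k))
  rw [hE, ← coe_apply_invIndex, ← apply_invIndex, hE, eq_add_of_sub_eq' (h k)]

theorem isAntiBalanced_of_fwdDiff_invIndex_eq_neg_one (hE : ∀ k, M.q (E k) = E (k + 1))
    (h : ∀ k, Δ_[1] (M.invIndex E) k = -1) : M.IsAntiBalanced := by
  intro x
  obtain ⟨k, rfl⟩ := E.surjective x
  show ((M.q (E k) : G))⁻¹ = (M.q⁻¹ (M.invGen (E k)) : G)
  have hq : M.q⁻¹ (E (M.invIndex E k)) = E (M.invIndex E k - 1) := by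
    rw [Equiv.Perm.inv_eq_iff_eq, hE, sub_add_cancel]
  rw [hE, ← coe_apply_invIndex, ← apply_invIndex, hq, eq_add_of_sub_eq' (h k), sub_eq_add_neg]

end Coordinates

section Abelian

variable {G : Type*} [CommGroup G] {M : CayleyMapData G}

theorem IsPowerFunction.sub_eq_sub_of_fwdDiff_eq {n : ℕ} {E : ZMod n ≃ {x : G // x ∈ M.X}}
    {J : G → ZMod n} (hJ : M.IsPowerFunction E J) {a b : ZMod n}
    (hab : Δ_[1] (M.invIndex E) a = Δ_[1] (M.invIndex E) b) (g : G) :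
    M.invIndex E (a + J g) - M.invIndex E a = M.invIndex E (b + J g) - M.invIndex E b := by
  induction g using M.induction_mul_right E with
  | one => rw [hJ.map_one]; exact hab
  | mul g k ih =>
    calc M.invIndex E (a + J (g * E k)) - M.invIndex E a = J (g * E k * E a) :=
          (hJ.map_mul _ _).symm
      _ = J (g * E a * E k) := by rw [mul_right_comm]
      _ = J (g * E b * E k) := by
          rw [hJ.map_mul, hJ.map_mul g a, ih, ← hJ.map_mul g b, ← hJ.map_mul]
      _ = J (g * E k * E b) := by rw [mul_right_comm]
      _ = M.invIndex E (b + J (g * E k)) - M.invIndex E b := hJ.map_mul _ _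

theorem IsPowerFunction.fwdDiff_invIndex_eq_one_or_neg_one {p : ℕ} [Fact p.Prime]
    {E : ZMod p ≃ {x : G // x ∈ M.X}} {J : G → ZMod p} (hJ : M.IsPowerFunction E J) :
    (∀ k, Δ_[1] (M.invIndex E) k = 1) ∨ ∀ k, Δ_[1] (M.invIndex E) k = -1 := by
  classical
  have : Fact (1 < p) := ⟨(Fact.out : p.Prime).one_lt⟩
  set Ω := univ.filter fun c => ∃ g, J g = c
  have hΩ : ∀ c ∈ Ω, ∃ g, J g = c := fun c hc => (mem_filter.1 hc).2
  have hJΩ : ∀ g, J g ∈ Ω := fun g => mem_filter.2 ⟨mem_univ _, g, rfl⟩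
  refine ZMod.fwdDiff_eq_one_or_neg_one_of_involutive (M.invIndex_involutive E)
    (ZMod.fwdDiff_eq_fwdDiff_zero_of_forall_sub_mem (M.invIndex_involutive E).injective
      (Ω := Ω) (fun h0 => ?_) (hJ.map_one ▸ hJΩ 1) (fun k c hc => ?_) (fun a b hab c hc => ?_))
  · obtain ⟨g, hg⟩ := hΩ 0 h0
    exact hJ.ne_zero g hg
  · obtain ⟨g, rfl⟩ := hΩ c hc
    exact hJ.map_mul g k ▸ hJΩ _
  · obtain ⟨g, rfl⟩ := hΩ c hc
    exact hJ.sub_eq_sub_of_fwdDiff_eq hab g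

end Abelian

end CayleyMapData

theorem prime_valent_regular_cayley_map_abelian_balanced_or_antibalanced_general
    {G : Type*} [CommGroup G] (p : ℕ) (hp : p.Prime)
    (M : CayleyMapData G) (hval : M.X.card = p) (hreg : M.IsRegular) :
    M.IsBalanced ∨ M.IsAntiBalanced := by
  have : Fact p.Prime := ⟨hp⟩
  obtain ⟨x₀⟩ : Nonempty {x : G // x ∈ M.X} := by
    rw [← Fintype.card_pos_iff, Fintype.card_coe, hval]
    exact hp.pos
  obtain ⟨E, hE⟩ : ∃ E : ZMod p ≃ {x : G // x ∈ M.X}, ∀ k, M.q (E k) = E (k + 1) := by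
    have h := M.q.exists_equiv_zmod_of_forall_exists_pow_apply_eq x₀ (M.single_cycle x₀)
    rwa [Fintype.card_coe, hval] at h
  obtain ⟨J, hJ⟩ := hreg.exists_isPowerFunction hE
  exact hJ.fwdDiff_invIndex_eq_one_or_neg_one.imp
    (CayleyMapData.isBalanced_of_fwdDiff_invIndex_eq_one hE)
    (CayleyMapData.isAntiBalanced_of_fwdDiff_invIndex_eq_neg_one hE)

/-- Every `p`-valent regular Cayley map on a finite abelian group is either
balanced or anti-balanced. -/
theorem prime_valent_regular_cayley_map_abelian_balanced_or_antibalanced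
    {G : Type*} [CommGroup G] [Fintype G] (p : ℕ) (hp : p.Prime)
    (M : CayleyMapData G) (hval : M.X.card = p) (hreg : M.IsRegular) :
    M.IsBalanced ∨ M.IsAntiBalanced :=
  prime_valent_regular_cayley_map_abelian_balanced_or_antibalanced_general p hp M hval hreg
end

section
/- Let p be an odd prime. Let ρ be the permutation of ℤ/p given by ρ(x) = x + 1, and let κ be a permutation of ℤ/p with κ∘κ = id and κ(0) = 0. If the subgroup ⟨ρ, κ⟩ of the symmetric group on ℤ/p admits an injective group homomorphism into AGL₁(p), the group of affine permutations x ↦ a·x + b of ℤ/p (a ∈ (ℤ/p)ˣ, b ∈ ℤ/p), then either κ is the identity or κ(x) = −x for all x ∈ ℤ/p. -/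
/-!
In characteristic `p`, an affine map `x ↦ a * x + b` of order dividing `p` has `a ^ p = 1`, hence
`a = 1`: it is a translation. So the embedding sends both `ρ` and `κ ρ κ⁻¹` to translations, and
since the translations of `ℤ/p` form a cyclic group of order `p`, injectivity gives
`κ ρ κ⁻¹ = ρ ^ n`. Then `κ (x + 1) = κ x + n`, so `κ x = n * x`, and `κ² = 1` forces `n = ±1`.
-/

namespace AffineEquiv

variable {k : Type*}

theorem apply_eq_linear_one_mul_add [CommRing k] (g : k ≃ᵃ[k] k) (x : k) :
    g x = g.linear 1 * x + g 0 := by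
  have hx : g.linear x = g.linear 1 * x := by
    simpa [smul_eq_mul, mul_comm] using g.linear.map_smul x 1
  rw [← hx]
  simpa using congrFun g.toAffineMap.decomp x

theorem linear_pow_apply_one [CommRing k] (g : k ≃ᵃ[k] k) (n : ℕ) :
    (g ^ n).linear 1 = g.linear 1 ^ n := by
  induction n with
  | zero => rw [pow_zero, pow_zero]; rfl
  | succ n ih =>
    rw [pow_succ', pow_succ, ← ih]
    show g.linear ((g ^ n).linear 1) = _
    simpa [smul_eq_mul, mul_comm] using (g.linear.map_smul ((g ^ n).linear 1) 1)

theorem eq_constVAdd_of_pow_char_eq_one [Field k] (p : ℕ) [Fact p.Prime] [CharP k p]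
    (g : k ≃ᵃ[k] k) (hg : g ^ p = 1) : g = constVAdd k k (g 0) := by
  have hslope : g.linear 1 = 1 := by
    have h : (g.linear 1 - 1) ^ p = 0 := by
      rw [sub_pow_char, one_pow, ← linear_pow_apply_one, hg]; exact sub_self 1
    exact sub_eq_zero.mp (pow_eq_zero_iff (Fact.out : p.Prime).ne_zero |>.mp h)
  ext x
  rw [apply_eq_linear_one_mul_add, hslope, one_mul, add_comm]
  rfl

theorem exists_pow_eq_of_pow_eq_one {p : ℕ} [Fact p.Prime] (g h : ZMod p ≃ᵃ[ZMod p] ZMod p)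
    (hg : g ^ p = 1) (hg1 : g ≠ 1) (hh : h ^ p = 1) : ∃ n : ℕ, h = g ^ n := by
  rw [eq_constVAdd_of_pow_char_eq_one p g hg] at hg1 ⊢
  rw [eq_constVAdd_of_pow_char_eq_one p h hh]
  have ht : g 0 ≠ 0 := by
    intro ht
    exact hg1 (by rw [ht, constVAdd_zero]; rfl)
  refine ⟨(h 0 / g 0).val, ?_⟩
  rw [← constVAdd_nsmul, nsmul_eq_mul, ZMod.natCast_zmod_val, div_mul_cancel₀ _ ht]

end AffineEquiv

theorem ZMod.perm_apply_eq_mul_add_of_mul_addRight_one {n : ℕ} [NeZero n]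
    (σ : Equiv.Perm (ZMod n)) (m : ZMod n)
    (h : σ * Equiv.addRight 1 = Equiv.addRight m * σ) (x : ZMod n) :
    σ x = m * x + σ 0 := by
  have hstep : ∀ y, σ (y + 1) = σ y + m := fun y => congrArg (· y) h
  rw [← ZMod.natCast_zmod_val x]
  induction x.val with
  | zero => simp
  | succ j ih => rw [Nat.cast_succ, hstep, ih]; ring

theorem involution_in_AGL1_general
    (p : ℕ) [hp : Fact p.Prime]
    (κ : Equiv.Perm (ZMod p)) (hκ2 : κ * κ = 1) (hκ0 : κ 0 = 0)
    (hembed : ∃ f : (Subgroup.closure ({Equiv.addRight (1 : ZMod p), κ} :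
          Set (Equiv.Perm (ZMod p)))) →* (ZMod p ≃ᵃ[ZMod p] ZMod p),
        Function.Injective f) :
    κ = 1 ∨ ∀ x : ZMod p, κ x = -x := by
  obtain ⟨f, hf⟩ := hembed
  set ρ : Subgroup.closure {Equiv.addRight (1 : ZMod p), κ} :=
    ⟨Equiv.addRight 1, Subgroup.subset_closure (by simp)⟩
  set κ' : Subgroup.closure {Equiv.addRight (1 : ZMod p), κ} :=
    ⟨κ, Subgroup.subset_closure (by simp)⟩
  have hρp : ρ ^ p = 1 := Subtype.ext <| by simp [ρ]
  have hfρ : f ρ ≠ 1 := by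
    rw [ne_eq, ← f.map_one, hf.eq_iff]
    intro h
    simpa [ρ] using DFunLike.congr_fun (congrArg Subtype.val h) 0
  obtain ⟨n, hn⟩ := AffineEquiv.exists_pow_eq_of_pow_eq_one (f ρ) (f (κ' * ρ * κ'⁻¹))
    (by rw [← map_pow, hρp, map_one]) hfρ
    (by rw [← map_pow, conj_pow, hρp, mul_one, mul_inv_cancel, map_one])
  have hconj : κ * Equiv.addRight 1 = Equiv.addRight (n : ZMod p) * κ := by
    have h := congrArg Subtype.val (hf (hn.trans (map_pow f ρ n).symm))
    simp only [Subgroup.coe_mul, Subgroup.coe_inv, Subgroup.coe_pow, Equiv.nsmul_addRight,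
      nsmul_eq_mul, mul_one, κ', ρ] at h
    rw [← h, inv_mul_cancel_right]
  have hlin (x : ZMod p) : κ x = n * x := by
    rw [ZMod.perm_apply_eq_mul_add_of_mul_addRight_one κ n hconj, hκ0, add_zero]
  have hsq : (n : ZMod p) * n = 1 := by
    simpa [hlin] using congrArg (· 1) hκ2
  rcases mul_self_eq_one_iff.mp hsq with h | h
  · exact Or.inl (Equiv.ext fun x => by simp [hlin, h])
  · exact Or.inr fun x => by simp [hlin, h]

/-- Lemma 3.1: Let `p` be an odd prime, `ρ : x ↦ x + 1` the `p`-cycle on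
`ℤ/p`, and `κ` an involutory permutation of `ℤ/p` fixing `0`. If `⟨ρ, κ⟩`
embeds into the 1-dimensional affine group `AGL₁(p)` (realized as the group of
affine self-equivalences of `ℤ/p`), then `κ` is the identity or `κ : x ↦ -x`. -/
theorem involution_in_AGL1
    (p : ℕ) [hp : Fact p.Prime] (hodd : Odd p)
    (κ : Equiv.Perm (ZMod p)) (hκ2 : κ * κ = 1) (hκ0 : κ 0 = 0)
    (hembed : ∃ f : (Subgroup.closure ({Equiv.addRight (1 : ZMod p), κ} :
          Set (Equiv.Perm (ZMod p)))) →* (ZMod p ≃ᵃ[ZMod p] ZMod p),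
        Function.Injective f) :
    κ = 1 ∨ ∀ x : ZMod p, κ x = -x :=
  involution_in_AGL1_general p (hp := hp) κ hκ2 hκ0 hembed
end

section
/- Let p be an odd prime and let n ≥ 2 be an integer with prime factorization n = p^{a₀} · p₁^{a₁} ⋯ p_t^{a_t}, where p₁, …, p_t are distinct primes different from p, a₀ ≥ 0 and a_i ≥ 1 for 1 ≤ i ≤ t. Then the number of integers ℓ with 0 < ℓ < n and ℓ^{p−1} + ℓ^{p−2} + … + ℓ + 1 ≡ 0 (mod n) equals (p−1)^t if a₀ ≤ 1 and p divides p_i − 1 for every i = 1, …, t, and equals 0 otherwise. -/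
/-!
Counting the residues `ℓ` modulo `n` with `n ∣ 1 + ℓ + ⋯ + ℓ^(p-1)` amounts to counting the roots
of the geometric sum in `ZMod n`, and by the Chinese remainder theorem this count is multiplicative
in `n`. Modulo `p` the only root is `1`, and modulo `p²` there is none, because the geometric sum at
`1 + p b` is `≡ p (mod p²)`. Modulo `q^a` with `q ≠ p`, the number `p` is a unit and every element
is a unit or nilpotent, so the roots are exactly the elements of order `p` of the unit group, which
has order `q^(a-1) (q-1)` and is cyclic when `q` is odd: there are `p - 1` of them if `p ∣ q - 1`
and none otherwise.
-/

open Finset Function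

def geomSumRoots (R : Type*) [CommRing R] (p : ℕ) : Set R :=
  {x | ∑ i ∈ range p, x ^ i = 0}

section

variable {R S : Type*} [CommRing R] [CommRing S] {p : ℕ}

lemma card_geomSumRoots_congr (e : R ≃+* S) :
    Nat.card (geomSumRoots R p) = Nat.card (geomSumRoots S p) :=
  Nat.card_congr <| e.toEquiv.subtypeEquiv fun x => by
    change _ = 0 ↔ _ = 0
    rw [← map_eq_zero_iff e e.injective, map_sum]
    simp only [map_pow, RingEquiv.toEquiv_eq_coe, EquivLike.coe_coe]

lemma geomSumRoots_prod : geomSumRoots (R × S) p = geomSumRoots R p ×ˢ geomSumRoots S p := by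
  ext x
  simp [geomSumRoots, Prod.ext_iff, Prod.fst_sum, Prod.snd_sum]

lemma geomSumRoots_pi {ι : Type*} (A : ι → Type*) [∀ i, CommRing (A i)] :
    geomSumRoots (Π i, A i) p = Set.univ.pi fun i => geomSumRoots (A i) p := by
  ext x
  simp [geomSumRoots, funext_iff, Finset.sum_apply]

lemma card_geomSumRoots_prod : Nat.card (geomSumRoots (R × S) p) =
    Nat.card (geomSumRoots R p) * Nat.card (geomSumRoots S p) := by
  rw [geomSumRoots_prod, Nat.card_congr (Equiv.Set.prod _ _), Nat.card_prod]

lemma card_geomSumRoots_pi {ι : Type*} [Fintype ι] (A : ι → Type*) [∀ i, CommRing (A i)] :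
    Nat.card (geomSumRoots (Π i, A i) p) = ∏ i, Nat.card (geomSumRoots (A i) p) := by
  rw [geomSumRoots_pi, Nat.card_congr (Equiv.Set.univPi _), Nat.card_pi]

end

lemma geomSumRoots_zmod_prime {p : ℕ} (hp : p.Prime) : geomSumRoots (ZMod p) p = {1} := by
  have := Fact.mk hp
  ext x
  refine ⟨fun hx => ?_, fun hx => ?_⟩
  · have h := geom_sum_mul x p
    rw [show ∑ i ∈ range p, x ^ i = 0 from hx, zero_mul, ZMod.pow_card] at h
    exact sub_eq_zero.mp h.symm
  · rw [Set.mem_singleton_iff.mp hx]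
    simp [geomSumRoots]

lemma Int.not_prime_sq_dvd_geom_sum {p : ℕ} (hp : p.Prime) (hodd : Odd p) (z : ℤ) :
    ¬ (p : ℤ) ^ 2 ∣ ∑ i ∈ Finset.range p, z ^ i := by
  intro h
  have hz : (z : ZMod p) = 1 := by
    have hroot : ((∑ i ∈ Finset.range p, z ^ i : ℤ) : ZMod p) = 0 :=
      (ZMod.intCast_zmod_eq_zero_iff_dvd _ _).mpr ((dvd_pow_self _ two_ne_zero).trans h)
    push_cast at hroot
    have hmem : (z : ZMod p) ∈ geomSumRoots (ZMod p) p := hroot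
    simpa [geomSumRoots_zmod_prime hp] using hmem
  obtain ⟨b, hb⟩ := (ZMod.intCast_eq_intCast_iff_dvd_sub 1 z p).mp (by simpa using hz.symm)
  have hsq := odd_sq_dvd_geom_sum₂_sub (1 : ℤ) b hodd
  simp only [one_pow, mul_one, ← hb, add_sub_cancel] at hsq
  have hpp : ((p ^ 2 : ℕ) : ℤ) ∣ (p : ℕ) := by simpa using dvd_sub h hsq
  have := Nat.le_of_dvd hp.pos (Int.natCast_dvd_natCast.mp hpp)
  nlinarith [hp.two_le]

lemma geomSumRoots_zmod_prime_pow_eq_empty {p a : ℕ} (hp : p.Prime) (hodd : Odd p)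
    (ha : 2 ≤ a) :
    geomSumRoots (ZMod (p ^ a)) p = ∅ := by
  refine Set.eq_empty_of_forall_notMem fun x hx => ?_
  obtain ⟨z, rfl⟩ := ZMod.intCast_surjective x
  have hsum : ((∑ i ∈ Finset.range p, z ^ i : ℤ) : ZMod (p ^ a)) = 0 := by
    push_cast
    exact hx
  rw [ZMod.intCast_zmod_eq_zero_iff_dvd, Nat.cast_pow] at hsum
  exact Int.not_prime_sq_dvd_geom_sum hp hodd z ((pow_dvd_pow _ ha).trans hsum)

lemma card_geomSumRoots_zmod_prime_pow_self {p : ℕ} (hp : p.Prime) (hodd : Odd p) (a : ℕ) :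
    Nat.card (geomSumRoots (ZMod (p ^ a)) p) = if a ≤ 1 then 1 else 0 := by
  match a with
  | 0 =>
    simpa using ⟨0, Set.ext fun _ => iff_of_true (Subsingleton.elim _ _) (Subsingleton.elim _ _)⟩
  | 1 => rw [pow_one, geomSumRoots_zmod_prime hp]; simp
  | k + 2 => simp [geomSumRoots_zmod_prime_pow_eq_empty hp hodd (Nat.le_add_left 2 k)]

lemma isUnit_geom_sum_of_isNilpotent_sub_one {R : Type*} [CommRing R] {p : ℕ} {x : R}
    (hp : IsUnit (p : R)) (hx : IsNilpotent (x - 1)) : IsUnit (∑ i ∈ range p, x ^ i) := by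
  have hdvd : x - 1 ∣ ∑ i ∈ range p, (x ^ i - 1) :=
    Finset.dvd_sum fun i _ => sub_one_dvd_pow_sub_one x i
  have hsum : ∑ i ∈ range p, x ^ i = p + ∑ i ∈ range p, (x ^ i - 1) := by
    simp [Finset.sum_sub_distrib]
  obtain ⟨c, hc⟩ := hdvd
  rw [hsum, hc]
  exact ((Commute.all _ _).isNilpotent_mul_right hx).isUnit_add_left_of_commute hp (Commute.all _ _)

lemma geomSumRoots_eq_setOf_orderOf_eq {R : Type*} [CommRing R] [Nontrivial R] {p : ℕ}
    (hp : p.Prime) (hpR : IsUnit (p : R)) (hR : ∀ y : R, IsUnit y ∨ IsNilpotent y) :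
    geomSumRoots R p = {x | orderOf x = p} := by
  have := Fact.mk hp
  ext x
  have hmul : (∑ i ∈ range p, x ^ i) * (x - 1) = x ^ p - 1 := geom_sum_mul x p
  simp only [geomSumRoots, Set.mem_ofPred_eq, orderOf_eq_prime_iff]
  constructor
  · intro hx
    refine ⟨by rwa [hx, zero_mul, eq_comm, sub_eq_zero] at hmul, fun h1 => ?_⟩
    simp [h1, hpR.ne_zero] at hx
  · rintro ⟨hxp, hx1⟩
    rw [hxp, sub_self] at hmul
    -- if `x - 1` is nilpotent, the geometric sum is `≡ p (mod x - 1)`, hence a unit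
    rcases hR (x - 1) with hunit | hnil
    · exact (hunit.mul_left_eq_zero).mp hmul
    · exact absurd ((isUnit_geom_sum_of_isNilpotent_sub_one hpR hnil).mul_right_eq_zero.mp hmul)
        (sub_ne_zero.mpr hx1)

lemma ZMod.isUnit_or_isNilpotent_of_prime_pow {q : ℕ} (hq : q.Prime) (a : ℕ)
    (y : ZMod (q ^ a)) :
    IsUnit y ∨ IsNilpotent y := by
  have : NeZero (q ^ a) := ⟨pow_ne_zero a hq.ne_zero⟩
  rw [← ZMod.natCast_zmod_val y, ZMod.isUnit_iff_coprime]
  by_cases hcop : y.val.Coprime q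
  · exact Or.inl (hcop.pow_right a)
  · refine Or.inr ⟨a, ?_⟩
    rw [← Nat.cast_pow, ZMod.natCast_eq_zero_iff]
    exact pow_dvd_pow_of_dvd (hq.dvd_iff_not_coprime.mpr (by rwa [Nat.coprime_comm] at hcop)) a

lemma Nat.card_setOf_orderOf_eq_units {M : Type*} [Monoid M] {n : ℕ} (hn : 0 < n) :
    Nat.card {x : M | orderOf x = n} = Nat.card {u : Mˣ | orderOf u = n} := by
  let f : {u : Mˣ | orderOf u = n} → {x : M | orderOf x = n} :=
    fun u => ⟨u.1, orderOf_units.trans u.2⟩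
  refine (Nat.card_congr (Equiv.ofBijective f ⟨fun u v h => ?_, fun x => ?_⟩)).symm
  · exact Subtype.ext (Units.ext (congrArg Subtype.val h))
  · have hx : IsOfFinOrder x.1 := orderOf_pos_iff.mp (x.2.symm ▸ hn)
    exact ⟨⟨hx.unit, orderOf_units.symm.trans x.2⟩, rfl⟩

lemma ZMod.card_setOf_orderOf_units_eq_prime {p q a : ℕ} (hp : p.Prime) (hq : q.Prime)
    (hqp : q ≠ p) (ha : a ≠ 0) :
    Nat.card {u : (ZMod (q ^ a))ˣ | orderOf u = p} = if p ∣ q - 1 then p - 1 else 0 := by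
  classical
  have : NeZero (q ^ a) := ⟨pow_ne_zero a hq.ne_zero⟩
  have hcard : Fintype.card (ZMod (q ^ a))ˣ = q ^ (a - 1) * (q - 1) := by
    rw [ZMod.card_units_eq_totient, Nat.totient_prime_pow hq (Nat.pos_of_ne_zero ha)]
  have hdvd : p ∣ Fintype.card (ZMod (q ^ a))ˣ ↔ p ∣ q - 1 := by
    rw [hcard]
    exact (((Nat.coprime_primes hp hq).mpr hqp.symm).pow_right _).dvd_mul_left
  rw [Nat.card_eq_card_toFinset, Set.toFinset_ofPred]
  split_ifs with h
  · have hq2 : q ≠ 2 := by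
      rintro rfl
      exact hp.not_dvd_one h
    have := ZMod.isCyclic_units_of_prime_pow q hq hq2 a
    rw [IsCyclic.card_orderOf_eq_totient (hdvd.mpr h), Nat.totient_prime hp]
  · rw [Finset.card_eq_zero, filter_eq_empty_iff]
    intro u _ hu
    exact h (hdvd.mp (hu ▸ orderOf_dvd_card))

lemma card_geomSumRoots_zmod_prime_pow_of_ne {p q a : ℕ} (hp : p.Prime) (hq : q.Prime)
    (hqp : q ≠ p) (ha : a ≠ 0) :
    Nat.card (geomSumRoots (ZMod (q ^ a)) p) = if p ∣ q - 1 then p - 1 else 0 := by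
  have : Fact (1 < q ^ a) := ⟨Nat.one_lt_pow ha hq.one_lt⟩
  have hpR : IsUnit (p : ZMod (q ^ a)) :=
    (ZMod.isUnit_iff_coprime p (q ^ a)).mpr (((Nat.coprime_primes hp hq).mpr hqp.symm).pow_right a)
  rw [geomSumRoots_eq_setOf_orderOf_eq hp hpR (ZMod.isUnit_or_isNilpotent_of_prime_pow hq a),
    Nat.card_setOf_orderOf_eq_units hp.pos, ZMod.card_setOf_orderOf_units_eq_prime hp hq hqp ha]

lemma card_filter_dvd_geom_sum_eq (n p : ℕ) [NeZero n] :
    #{ℓ ∈ range n | n ∣ ∑ j ∈ range p, ℓ ^ j} = Nat.card (geomSumRoots (ZMod n) p) := by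
  classical
  have hdvd_iff (ℓ : ℕ) :
      n ∣ ∑ j ∈ range p, ℓ ^ j ↔ (ℓ : ZMod n) ∈ geomSumRoots (ZMod n) p := by
    rw [← ZMod.natCast_eq_zero_iff]
    push_cast
    rfl
  rw [Nat.card_eq_card_toFinset]
  refine Finset.card_nbij' (fun ℓ => (ℓ : ZMod n)) ZMod.val ?_ ?_ ?_ ?_
  · intro ℓ hℓ
    rw [mem_coe, mem_filter, hdvd_iff] at hℓ
    simpa using hℓ.2
  · intro x hx
    rw [mem_coe, Set.mem_toFinset, ← ZMod.natCast_zmod_val x, ← hdvd_iff] at hx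
    simpa [ZMod.val_lt] using hx
  · intro ℓ hℓ
    exact ZMod.val_cast_of_lt (mem_range.mp (mem_filter.mp hℓ).1)
  · intro x _
    exact ZMod.natCast_zmod_val x

lemma card_geomSumRoots_zmod_mul {m k : ℕ} (p : ℕ) (h : m.Coprime k) :
    Nat.card (geomSumRoots (ZMod (m * k)) p) =
      Nat.card (geomSumRoots (ZMod m) p) * Nat.card (geomSumRoots (ZMod k) p) := by
  rw [card_geomSumRoots_congr (ZMod.chineseRemainder h), card_geomSumRoots_prod]

lemma card_geomSumRoots_zmod_prod {ι : Type*} [Fintype ι] (m : ι → ℕ)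
    (h : Pairwise (Nat.Coprime on m)) (p : ℕ) :
    Nat.card (geomSumRoots (ZMod (∏ i, m i)) p) =
      ∏ i, Nat.card (geomSumRoots (ZMod (m i)) p) := by
  rw [card_geomSumRoots_congr (ZMod.prodEquivPi m h), card_geomSumRoots_pi]

/-- Theorem 3.4: for an odd prime `p` and `n = p^{a₀}·p₁^{a₁}⋯p_t^{a_t} ≥ 2`
(with `p₁, …, p_t` distinct primes different from `p`), the number of integers
`0 < ℓ < n` with `ℓ^{p-1} + ℓ^{p-2} + … + ℓ + 1 ≡ 0 (mod n)` equals `(p-1)^t`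
if `a₀ ≤ 1` and `p ∣ pᵢ - 1` for all `i`, and `0` otherwise. -/
theorem count_prime_valent_regular_cayley_maps_dihedral
    (p : ℕ) (hp : p.Prime) (hodd : Odd p)
    (n : ℕ) (hn : 2 ≤ n)
    (t : ℕ) (a₀ : ℕ) (ps as : Fin t → ℕ)
    (hps : ∀ i, (ps i).Prime) (hpsne : ∀ i, ps i ≠ p)
    (hinj : Function.Injective ps)
    (has : ∀ i, 1 ≤ as i)
    (hfact : n = p ^ a₀ * ∏ i, ps i ^ as i) :
    ((Finset.range n).filter
        (fun ℓ => 0 < ℓ ∧ n ∣ ∑ j ∈ Finset.range p, ℓ ^ j)).card =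
      if a₀ ≤ 1 ∧ ∀ i, p ∣ ps i - 1 then (p - 1) ^ t else 0 := by
  have : NeZero n := ⟨by omega⟩
  have hpos : ∀ ℓ, n ∣ ∑ j ∈ range p, ℓ ^ j → 0 < ℓ := by
    rintro ℓ hℓ
    refine Nat.pos_of_ne_zero fun h0 => ?_
    rw [h0, zero_geom_sum, if_neg hp.ne_zero, Nat.dvd_one] at hℓ
    omega
  have hcop : (p ^ a₀).Coprime (∏ i, ps i ^ as i) :=
    Nat.Coprime.prod_right fun i _ =>
      (((Nat.coprime_primes hp (hps i)).mpr (hpsne i).symm).pow _ _)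
  have hpair : Pairwise (Nat.Coprime on fun i => ps i ^ as i) := fun i j hij =>
    ((Nat.coprime_primes (hps i) (hps j)).mpr (hinj.ne hij)).pow _ _
  rw [filter_congr fun ℓ _ => and_iff_right_of_imp (hpos ℓ), card_filter_dvd_geom_sum_eq,
    hfact, card_geomSumRoots_zmod_mul p hcop, card_geomSumRoots_zmod_prod _ hpair,
    card_geomSumRoots_zmod_prime_pow_self hp hodd]
  simp_rw [card_geomSumRoots_zmod_prime_pow_of_ne hp (hps _) (hpsne _)
    (Nat.one_le_iff_ne_zero.mp (has _)), Fintype.prod_ite_zero]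
  rw [prod_const, card_univ, Fintype.card_fin, ite_and]
  split_ifs <;> simp
end

section
/- Let p be an odd prime and let a ≥ 2 be an integer. Then there is no element x ∈ ℤ/p^a satisfying x^{p−1} + x^{p−2} + … + x + 1 = 0 in ℤ/p^a. -/
lemma one_add_sq_zero_pow {R : Type*} [CommRing R] (c : R) (hc : c * c = 0) :
    ∀ i : ℕ, (1 + c) ^ i = 1 + (i : R) * c := by
  intro i
  induction i with
  | zero => simp
  | succ n ih =>
    rw [pow_succ, ih]
    push_cast
    linear_combination (n : R) * hc

/-- For an odd prime `p` and `a ≥ 2`, there is no `x ∈ ℤ/p^a` with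
`x^{p-1} + x^{p-2} + … + x + 1 = 0`. -/
theorem geom_sum_ne_zero_zmod_prime_pow (p : ℕ) [hp : Fact p.Prime]
    (hodd : Odd p) (a : ℕ) (ha : 2 ≤ a) :
    ¬ ∃ x : ZMod (p ^ a), ∑ i ∈ Finset.range p, x ^ i = 0 := by
  rintro ⟨x, hx⟩
  have hp1 : 1 < p := hp.out.one_lt
  have hdvd : (p ^ 2 : ℕ) ∣ p ^ a := pow_dvd_pow p ha
  have hne2 : NeZero (p ^ 2) := ⟨pow_ne_zero 2 hp.out.ne_zero⟩
  have hnep : NeZero p := ⟨hp.out.ne_zero⟩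
  let f := ZMod.castHom hdvd (ZMod (p ^ 2))
  set y := f x with hy_def
  have hy : ∑ i ∈ Finset.range p, y ^ i = 0 := by
    have := congrArg f hx
    simpa [map_sum, map_pow] using this
  -- reduce mod p
  have hdp : p ∣ p ^ 2 := dvd_pow_self p two_ne_zero
  let g := ZMod.castHom hdp (ZMod p)
  set z := g y with hz_def
  have hz : ∑ i ∈ Finset.range p, z ^ i = 0 := by
    have := congrArg g hy
    simpa [map_sum, map_pow] using this
  have hz1 : z = 1 := by
    have h1 : (∑ i ∈ Finset.range p, z ^ i) * (z - 1) = z ^ p - 1 := geom_sum_mul z p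
    rw [hz, zero_mul, ZMod.pow_card] at h1
    linear_combination -h1
  -- so y - 1 is a multiple of p in ZMod (p^2)
  have hcast : ((y - 1).val : ZMod p) = 0 := by
    rw [ZMod.natCast_val]
    have h0 : g (y - 1) = 0 := by rw [map_sub, ← hz_def, hz1, map_one, sub_self]
    simpa [g, ZMod.castHom_apply] using h0
  obtain ⟨m, hm⟩ := (ZMod.natCast_eq_zero_iff _ p).mp hcast
  have hval : (((y - 1).val : ℕ) : ZMod (p ^ 2)) = y - 1 := by
    rw [ZMod.natCast_val, ZMod.cast_id]
  rw [hm] at hval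
  push_cast at hval
  set c : ZMod (p ^ 2) := (p : ZMod (p ^ 2)) * (m : ZMod (p ^ 2)) with hc_def
  have hy1 : y = 1 + c := by linear_combination -hval
  have hpp : (p : ZMod (p ^ 2)) * (p : ZMod (p ^ 2)) = 0 := by
    rw [← Nat.cast_mul, ← pow_two]
    exact ZMod.natCast_self _
  have hcc : c * c = 0 := by
    rw [hc_def]
    linear_combination ((m : ZMod (p^2)) * (m : ZMod (p^2))) * hpp
  obtain ⟨k, hk⟩ := hodd
  have hgauss : ∑ i ∈ Finset.range p, i = p * k := by
    have h2 := Finset.sum_range_id_mul_two p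
    have h3 : p * (p - 1) = (p * k) * 2 := by
      have h4 : p - 1 = 2 * k := by omega
      rw [h4]; ring
    exact Nat.eq_of_mul_eq_mul_right two_pos (h2.trans h3)
  have hsum : ∑ i ∈ Finset.range p, y ^ i = (p : ZMod (p ^ 2)) := by
    calc ∑ i ∈ Finset.range p, y ^ i
        = ∑ i ∈ Finset.range p, (1 + (i : ZMod (p ^ 2)) * c) := by
          refine Finset.sum_congr rfl fun i _ => ?_
          rw [hy1, one_add_sq_zero_pow c hcc]
      _ = (p : ZMod (p ^ 2)) + ((∑ i ∈ Finset.range p, i : ℕ) : ZMod (p ^ 2)) * c := by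
          rw [Finset.sum_add_distrib, ← Finset.sum_mul]
          push_cast
          simp
      _ = (p : ZMod (p ^ 2)) := by
          rw [hgauss, hc_def]
          push_cast
          linear_combination ((k : ZMod (p^2)) * (m : ZMod (p^2))) * hpp
  rw [hsum] at hy
  have : (p ^ 2 : ℕ) ∣ p := (ZMod.natCast_eq_zero_iff p (p ^ 2)).mp hy
  have hle := Nat.le_of_dvd (by omega) this
  nlinarith
end

section
/- Let p be an odd prime and let n ≥ 1 be an integer. There exists a matrix A in the general linear group GL_n(𝔽₂) of invertible n×n matrices over the field with two elements with A^p = I and A ≠ I if and only if there exists an integer k with 1 ≤ k ≤ n such that p divides 2^k − 1 (equivalently, if and only if the multiplicative order of 2 modulo p is at most n). -/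
/-!
An element of prime order `p` exists in a finite group exactly when `p` divides the group order
(Lagrange and Cauchy). The order of `GL_n(𝔽_q)` is `∏_{i<n} (q^n - q^i) = ∏_{i<n} q^i (q^(n-i) - 1)`,
and a prime `p ∤ q` divides this product iff it divides one of the factors `q^k - 1`, `1 ≤ k ≤ n`.
-/

theorem exists_pow_eq_one_ne_one_iff_prime_dvd_card {G : Type*} [Group G] [Finite G] {p : ℕ}
    [Fact p.Prime] : (∃ g : G, g ^ p = 1 ∧ g ≠ 1) ↔ p ∣ Nat.card G := by
  constructor
  · rintro ⟨g, hgp, hg1⟩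
    exact orderOf_eq_prime hgp hg1 ▸ orderOf_dvd_natCard g
  · intro hdvd
    obtain ⟨g, hg⟩ := exists_prime_orderOf_dvd_card' p hdvd
    refine ⟨g, hg ▸ pow_orderOf_eq_one g, fun h => ?_⟩
    rw [h, orderOf_one] at hg
    exact (Fact.out : p.Prime).one_lt.ne' hg.symm

theorem Nat.pow_sub_pow_eq_pow_mul {q i n : ℕ} (hi : i ≤ n) :
    q ^ n - q ^ i = q ^ i * (q ^ (n - i) - 1) := by
  rw [Nat.mul_sub, mul_one, ← pow_add, Nat.add_sub_cancel' hi]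

theorem Nat.Prime.dvd_prod_pow_sub_pow_iff {p q : ℕ} (hp : p.Prime) (hpq : ¬p ∣ q) (n : ℕ) :
    p ∣ ∏ i : Fin n, (q ^ n - q ^ (i : ℕ)) ↔ ∃ k, 1 ≤ k ∧ k ≤ n ∧ p ∣ q ^ k - 1 := by
  have hfactor (i : ℕ) (hi : i ≤ n) : p ∣ q ^ n - q ^ i ↔ p ∣ q ^ (n - i) - 1 := by
    rw [Nat.pow_sub_pow_eq_pow_mul hi, hp.prime.dvd_mul,
      or_iff_right fun h => hpq (hp.dvd_of_dvd_pow h)]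
  rw [hp.prime.dvd_finsetProd_iff]
  constructor
  · rintro ⟨i, -, hi⟩
    exact ⟨n - i, by omega, by omega, (hfactor i i.isLt.le).1 hi⟩
  · rintro ⟨k, hk1, hkn, hk⟩
    refine ⟨⟨n - k, by omega⟩, Finset.mem_univ _, (hfactor (n - k) (by omega)).2 ?_⟩
    rwa [Nat.sub_sub_self hkn]

theorem exists_gl_order_p_iff_general (p n : ℕ) (hp : p.Prime) (hodd : Odd p) :
    (∃ A : Matrix.GeneralLinearGroup (Fin n) (ZMod 2), A ^ p = 1 ∧ A ≠ 1) ↔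
      ∃ k : ℕ, 1 ≤ k ∧ k ≤ n ∧ p ∣ 2 ^ k - 1 := by
  have : Fact p.Prime := ⟨hp⟩
  have hp2 : ¬p ∣ 2 := fun h =>
    hodd.not_two_dvd_nat (by rw [(Nat.prime_dvd_prime_iff_eq hp Nat.prime_two).1 h])
  have hcard : Nat.card (GL (Fin n) (ZMod 2)) = ∏ i : Fin n, (2 ^ n - 2 ^ (i : ℕ)) := by
    simpa using Matrix.card_GL_field (𝔽 := ZMod 2) n
  rw [exists_pow_eq_one_ne_one_iff_prime_dvd_card, hcard]
  exact hp.dvd_prod_pow_sub_pow_iff hp2 n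

/-- For an odd prime `p` there is a matrix `A ∈ GL_n(𝔽₂)` with `A^p = I` and
`A ≠ I` iff `p` divides `2^k - 1` for some `1 ≤ k ≤ n` (equivalently, the
multiplicative order of `2` mod `p` is at most `n`). -/
theorem exists_gl_order_p_iff (p n : ℕ) (hp : p.Prime) (hodd : Odd p)
    (hn : 1 ≤ n) :
    (∃ A : Matrix.GeneralLinearGroup (Fin n) (ZMod 2), A ^ p = 1 ∧ A ≠ 1) ↔
      ∃ k : ℕ, 1 ≤ k ∧ k ≤ n ∧ p ∣ 2 ^ k - 1 :=
  exists_gl_order_p_iff_general p n hp hodd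
end
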